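/- Let Ψ : ℝ → ℝ be a nonnegative convex function vanishing only at 0 and integrable against e^{-λΨ}. Then the map R : (0,∞) → (0,∞), R(λ) = (∫ Ψ e^{-λΨ}) / (∫ e^{-λΨ}), is surjective onto (0,∞). -/

import Mathlib

/-!
`R λ` is the mean of `Ψ` under the Gibbs measure with density proportional to `exp (-λ Ψ)`.
It is continuous by dominated convergence, so by the intermediate value theorem it suffices
that `R → 0` as `λ → ∞` and `R → ∞` as `λ → 0⁺`. As `λ → ∞` the Gibbs measure concentrates
on `{Ψ < ε}`, which has positive Lebesgue measure because `Ψ` is continuous and vanishes at `0`.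
As `λ → 0⁺` the total mass `∫ exp (-λ Ψ)` tends to the infinite measure of `ℝ`, whereas each
sublevel set `{Ψ < M}` has finite measure since a convex `Ψ` with `Ψ 0 = 0 < Ψ (±1)` grows at
least linearly; so the Gibbs measure escapes to `{Ψ ≥ M}`.
-/

open MeasureTheory Real Filter Set

open scoped Topology ENNReal

lemma mul_exp_neg_mul_le (x : ℝ) {l : ℝ} (hl : 0 < l) :
    x * exp (-l * x) ≤ 2 / l * exp (-(l / 2) * x) := by
  have hx : l / 2 * x ≤ exp (l / 2 * x) := by linarith [add_one_le_exp (l / 2 * x)]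
  have hsplit : exp (-l * x) = exp (-(l / 2 * x)) * exp (-(l / 2) * x) := by
    rw [← exp_add]; ring_nf
  calc x * exp (-l * x) = 2 / l * (l / 2 * x) * exp (-(l / 2 * x)) * exp (-(l / 2) * x) := by
        rw [hsplit]; field_simp
    _ ≤ 2 / l * exp (l / 2 * x) * exp (-(l / 2 * x)) * exp (-(l / 2) * x) := by gcongr
    _ = 2 / l * exp (-(l / 2) * x) := by
        rw [mul_assoc (2 / l), ← exp_add, add_neg_cancel, exp_zero, mul_one]

noncomputable def meanEnergy {α : Type*} [MeasurableSpace α] (μ : Measure α) (f : α → ℝ)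
    (l : ℝ) : ℝ :=
  (∫ x, f x * exp (-l * f x) ∂μ) / ∫ x, exp (-l * f x) ∂μ

section

variable {α : Type*} [MeasurableSpace α] {μ : Measure α} {f : α → ℝ}

lemma integrable_mul_exp_neg_mul (hf : Measurable f) (hf0 : ∀ x, 0 ≤ f x)
    (hint : ∀ l, 0 < l → Integrable (fun x => exp (-l * f x)) μ) {l : ℝ} (hl : 0 < l) :
    Integrable (fun x => f x * exp (-l * f x)) μ := by
  refine ((hint (l / 2) (by positivity)).const_mul (2 / l)).mono'
    (hf.mul (hf.const_mul _).exp).aestronglyMeasurable (.of_forall fun x => ?_)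
  rw [norm_of_nonneg (by have := hf0 x; positivity)]
  exact mul_exp_neg_mul_le _ hl

lemma continuousOn_integral_mul_exp_neg_mul {g : α → ℝ} (hf0 : ∀ x, 0 ≤ f x)
    (hint : ∀ l, 0 < l → Integrable (fun x => g x * exp (-l * f x)) μ) :
    ContinuousOn (fun l => ∫ x, g x * exp (-l * f x) ∂μ) (Ioi 0) := by
  intro l₀ hl₀
  have hl₀' : 0 < l₀ / 2 := half_pos hl₀
  have hnear : ∀ᶠ l in 𝓝 l₀, l₀ / 2 < l := eventually_gt_nhds (half_lt_self hl₀)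
  refine (continuousAt_of_dominated (bound := fun x => ‖g x * exp (-(l₀ / 2) * f x)‖)
    ?_ ?_ (hint _ hl₀').norm (.of_forall fun x => by fun_prop)).continuousWithinAt
  · filter_upwards [hnear] with l hl using (hint l (hl₀'.trans hl)).aestronglyMeasurable
  · filter_upwards [hnear] with l hl
    refine .of_forall fun x => ?_
    simp only [norm_mul, norm_of_nonneg (exp_pos _).le]
    gcongr
    nlinarith [hf0 x]

lemma continuousOn_meanEnergy [NeZero μ] (hf : Measurable f) (hf0 : ∀ x, 0 ≤ f x)
    (hint : ∀ l, 0 < l → Integrable (fun x => exp (-l * f x)) μ) :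
    ContinuousOn (meanEnergy μ f) (Ioi 0) := by
  have hZ : ContinuousOn (fun l => ∫ x, exp (-l * f x) ∂μ) (Ioi 0) := by
    simpa using continuousOn_integral_mul_exp_neg_mul (g := fun _ => 1) hf0
      (by simpa using hint)
  exact (continuousOn_integral_mul_exp_neg_mul hf0
    fun l hl => integrable_mul_exp_neg_mul hf hf0 hint hl).div hZ
    fun l hl => (integral_exp_pos (hint l hl)).ne'

lemma meanEnergy_nonneg (hf0 : ∀ x, 0 ≤ f x) (l : ℝ) : 0 ≤ meanEnergy μ f l :=
  div_nonneg (integral_nonneg fun x => mul_nonneg (hf0 x) (exp_pos _).le)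
    (integral_nonneg fun _ => (exp_pos _).le)

lemma exp_neg_mul_mul_measureReal_le_integral (hf : Measurable f)
    (hint : ∀ l, 0 < l → Integrable (fun x => exp (-l * f x)) μ) {l c : ℝ} (hl : 0 < l)
    (hc : μ {x | f x < c} ≠ ∞) :
    exp (-l * c) * μ.real {x | f x < c} ≤ ∫ x, exp (-l * f x) ∂μ :=
  calc exp (-l * c) * μ.real {x | f x < c} ≤ ∫ x in {x | f x < c}, exp (-l * f x) ∂μ :=
        setIntegral_ge_of_const_le_real (hf measurableSet_Iio) hc
          (fun x (hx : f x < c) => exp_le_exp.2 (by nlinarith)) (hint l hl).integrableOn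
    _ ≤ ∫ x, exp (-l * f x) ∂μ :=
        setIntegral_le_integral (hint l hl) (.of_forall fun _ => (exp_pos _).le)

lemma mul_integral_exp_neg_mul_le (hf : Measurable f) (hf0 : ∀ x, 0 ≤ f x)
    (hint : ∀ l, 0 < l → Integrable (fun x => exp (-l * f x)) μ) {l M : ℝ} (hl : 0 < l)
    (hs : μ {x | f x < M} ≠ ∞) :
    M * ∫ x, exp (-l * f x) ∂μ ≤
      (∫ x, f x * exp (-l * f x) ∂μ) + M * μ.real {x | f x < M} := by
  have hsm : MeasurableSet {x | f x < M} := hf measurableSet_Iio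
  rw [← integral_const_mul, mul_comm M, ← smul_eq_mul, ← integral_indicator_const _ hsm,
    ← integral_add (integrable_mul_exp_neg_mul hf hf0 hint hl)
      ((integrable_indicator_iff hsm).2 (integrableOn_const hs))]
  refine integral_mono ((hint l hl).const_mul M) ((integrable_mul_exp_neg_mul hf hf0 hint hl).add
    ((integrable_indicator_iff hsm).2 (integrableOn_const hs))) fun x => ?_
  have hexp : exp (-l * f x) ≤ 1 := exp_le_one_iff.2 (by nlinarith [hf0 x])
  by_cases hx : f x < M
  · simp only [indicator_of_mem (show x ∈ {x | f x < M} from hx)]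
    nlinarith [hf0 x, exp_pos (-l * f x)]
  · simp only [indicator_of_notMem (show x ∉ {x | f x < M} from hx), add_zero]
    exact mul_le_mul_of_nonneg_right (not_lt.1 hx) (exp_pos _).le

lemma integral_mul_exp_neg_mul_le (hf : Measurable f) (hf0 : ∀ x, 0 ≤ f x)
    (hint : ∀ l, 0 < l → Integrable (fun x => exp (-l * f x)) μ) {l₁ l ε : ℝ} (hl₁ : 0 < l₁)
    (hl : l₁ ≤ l) (hε : 0 ≤ ε) :
    ∫ x, f x * exp (-l * f x) ∂μ ≤
      ε * (∫ x, exp (-l * f x) ∂μ) +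
        exp (-(l - l₁) * ε) * ∫ x, f x * exp (-l₁ * f x) ∂μ := by
  have hl0 : 0 < l := hl₁.trans_le hl
  have hZ_int := (hint l hl0).const_mul ε
  have hG₁_int := (integrable_mul_exp_neg_mul hf hf0 hint hl₁).const_mul (exp (-(l - l₁) * ε))
  rw [← integral_const_mul, ← integral_const_mul, ← integral_add hZ_int hG₁_int]
  refine integral_mono (integrable_mul_exp_neg_mul hf hf0 hint hl0) (hZ_int.add hG₁_int)
    fun x => ?_
  have hG₁ : 0 ≤ exp (-(l - l₁) * ε) * (f x * exp (-l₁ * f x)) := by have := hf0 x; positivity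
  have hZ : 0 ≤ ε * exp (-l * f x) := by positivity
  rcases le_or_gt (f x) ε with hx | hx
  · have := mul_le_mul_of_nonneg_right hx (exp_pos (-l * f x)).le
    linarith
  · have hsplit : exp (-l * f x) = exp (-(l - l₁) * f x) * exp (-l₁ * f x) := by
      rw [← exp_add]; ring_nf
    have hdecay : exp (-(l - l₁) * f x) ≤ exp (-(l - l₁) * ε) := exp_le_exp.2 (by nlinarith)
    have := mul_le_mul_of_nonneg_right hdecay (mul_nonneg (hf0 x) (exp_pos (-l₁ * f x)).le)
    calc f x * exp (-l * f x) = exp (-(l - l₁) * f x) * (f x * exp (-l₁ * f x)) := by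
          rw [hsplit]; ring
      _ ≤ exp (-(l - l₁) * ε) * (f x * exp (-l₁ * f x)) := this
      _ ≤ _ := le_add_of_nonneg_left hZ

theorem tendsto_meanEnergy_atTop (hf : Measurable f) (hf0 : ∀ x, 0 ≤ f x)
    (hint : ∀ l, 0 < l → Integrable (fun x => exp (-l * f x)) μ)
    (hpos : ∀ ε, 0 < ε → 0 < μ.real {x | f x < ε}) :
    Tendsto (meanEnergy μ f) atTop (𝓝 0) := by
  refine tendsto_order.2 ⟨fun a ha => .of_forall fun l => ha.trans_le (meanEnergy_nonneg hf0 l),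
    fun δ hδ => ?_⟩
  set ε := δ / 2 with hεδ
  have hε : 0 < ε := half_pos hδ
  set c := μ.real {x | f x < ε / 2}
  have hc : 0 < c := hpos _ (half_pos hε)
  have hcfin : μ {x | f x < ε / 2} ≠ ∞ := (ENNReal.toReal_pos_iff.1 hc).2.ne
  set K := ∫ x, f x * exp (-1 * f x) ∂μ
  have hK : 0 ≤ K := integral_nonneg fun x => mul_nonneg (hf0 x) (exp_pos _).le
  have hdecay : Tendsto (fun l => K / c * exp (ε - l * (ε / 2))) atTop (𝓝 0) := by
    have : Tendsto (fun l => ε - l * (ε / 2)) atTop atBot :=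
      tendsto_atBot_add_const_left _ ε (tendsto_neg_atTop_atBot.comp
        (tendsto_id.atTop_mul_const (half_pos hε)))
    simpa using (tendsto_exp_atBot.comp this).const_mul (K / c)
  filter_upwards [hdecay.eventually (gt_mem_nhds hε), eventually_ge_atTop 1] with l hl hl1
  have hZ := exp_neg_mul_mul_measureReal_le_integral hf hint (one_pos.trans_le hl1) hcfin
  have hZpos : 0 < ∫ x, exp (-l * f x) ∂μ := lt_of_lt_of_le (by positivity) hZ
  have hG := integral_mul_exp_neg_mul_le hf hf0 hint one_pos hl1 hε.le
  have hsplit : exp (-(l - 1) * ε) = exp (ε - l * (ε / 2)) * exp (-l * (ε / 2)) := by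
    rw [← exp_add]; ring_nf
  calc meanEnergy μ f l
      ≤ ε + exp (-(l - 1) * ε) * K / ∫ x, exp (-l * f x) ∂μ := by
        rw [meanEnergy, div_le_iff₀ hZpos, add_mul, div_mul_cancel₀ _ hZpos.ne']
        exact hG
    _ ≤ ε + exp (-(l - 1) * ε) * K / (exp (-l * (ε / 2)) * c) := by gcongr
    _ = ε + K / c * exp (ε - l * (ε / 2)) := by rw [hsplit]; field_simp
    _ < δ := by linarith

lemma exists_lt_measureReal_sublevel (hfin : ∀ M, μ {x | f x < M} ≠ ∞) (hinf : μ univ = ∞)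
    (K : ℝ) : ∃ M, K < μ.real {x | f x < M} := by
  by_contra! h
  have hU : (⋃ n : ℕ, {x | f x < n}) = univ :=
    eq_univ_of_forall fun x => mem_iUnion.2 (exists_nat_gt (f x))
  have hmono : Monotone fun n : ℕ => {x | f x < n} := fun m n hmn x (hx : f x < m) =>
    show f x < n from hx.trans_le (Nat.cast_le.2 hmn)
  have : μ univ ≤ ENNReal.ofReal K := by
    rw [← hU, hmono.measure_iUnion]
    exact iSup_le fun n => ENNReal.ofReal_toReal (hfin n) ▸ ENNReal.ofReal_le_ofReal (h n)
  simp [hinf] at this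

lemma tendsto_integral_exp_neg_mul_nhdsGT_zero (hf : Measurable f)
    (hint : ∀ l, 0 < l → Integrable (fun x => exp (-l * f x)) μ)
    (hfin : ∀ M, μ {x | f x < M} ≠ ∞) (hinf : μ univ = ∞) :
    Tendsto (fun l => ∫ x, exp (-l * f x) ∂μ) (𝓝[>] 0) atTop := by
  refine tendsto_atTop.2 fun K => ?_
  obtain ⟨M, hM⟩ := exists_lt_measureReal_sublevel hfin hinf K
  have hlim : Tendsto (fun l => exp (-l * M) * μ.real {x | f x < M}) (𝓝[>] 0)
      (𝓝 (μ.real {x | f x < M})) := by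
    have : Continuous fun l => exp (-l * M) * μ.real {x | f x < M} := by fun_prop
    simpa using (this.tendsto 0).mono_left nhdsWithin_le_nhds
  filter_upwards [hlim.eventually (eventually_ge_nhds hM), self_mem_nhdsWithin] with l hKl hl
  exact hKl.trans (exp_neg_mul_mul_measureReal_le_integral hf hint hl (hfin M))

lemma half_le_meanEnergy (hf : Measurable f) (hf0 : ∀ x, 0 ≤ f x)
    (hint : ∀ l, 0 < l → Integrable (fun x => exp (-l * f x)) μ) {l M : ℝ} (hl : 0 < l)
    (hM : 0 ≤ M) (hs : μ {x | f x < M} ≠ ∞)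
    (hZ : 2 * μ.real {x | f x < M} < ∫ x, exp (-l * f x) ∂μ) :
    M / 2 ≤ meanEnergy μ f l := by
  have hZpos : 0 < ∫ x, exp (-l * f x) ∂μ := lt_of_le_of_lt (by positivity) hZ
  have := mul_integral_exp_neg_mul_le hf hf0 hint hl hs
  rw [meanEnergy, le_div_iff₀ hZpos]
  nlinarith

theorem tendsto_meanEnergy_nhdsGT_zero (hf : Measurable f) (hf0 : ∀ x, 0 ≤ f x)
    (hint : ∀ l, 0 < l → Integrable (fun x => exp (-l * f x)) μ)
    (hfin : ∀ M, μ {x | f x < M} ≠ ∞) (hinf : μ univ = ∞) :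
    Tendsto (meanEnergy μ f) (𝓝[>] 0) atTop := by
  refine tendsto_atTop.2 fun b => ?_
  filter_upwards [(tendsto_integral_exp_neg_mul_nhdsGT_zero hf hint hfin hinf).eventually_gt_atTop
    (2 * μ.real {x | f x < 2 * |b|}), self_mem_nhdsWithin] with l hZ hl
  calc b ≤ 2 * |b| / 2 := by linarith [le_abs_self b]
    _ ≤ meanEnergy μ f l := half_le_meanEnergy hf hf0 hint hl (by positivity) (hfin _) hZ

end

lemma ConvexOn.mul_le_map_smul_of_one_le {E : Type*} [AddCommGroup E] [Module ℝ E] {φ : E → ℝ}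
    (hφ : ConvexOn ℝ univ φ) (h0 : φ 0 ≤ 0) (x : E) {t : ℝ} (ht : 1 ≤ t) :
    t * φ x ≤ φ (t • x) := by
  have ht0 : 0 < t := one_pos.trans_le ht
  have hx : t⁻¹ • t • x + (1 - t⁻¹) • (0 : E) = x := by
    rw [smul_smul, inv_mul_cancel₀ ht0.ne', one_smul, smul_zero, add_zero]
  have := hφ.2 (mem_univ (t • x)) (mem_univ 0) (inv_nonneg.2 ht0.le)
    (sub_nonneg.2 (inv_le_one_of_one_le₀ ht)) (add_sub_cancel _ _)
  rw [hx, smul_eq_mul, smul_eq_mul] at this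
  have h1 : (1 - t⁻¹) * φ 0 ≤ 0 := mul_nonpos_of_nonneg_of_nonpos
    (sub_nonneg.2 (inv_le_one_of_one_le₀ ht)) h0
  rw [← le_div_iff₀' ht0, div_eq_inv_mul]
  linarith

lemma ConvexOn.tendsto_cocompact_atTop {φ : ℝ → ℝ} (hφ : ConvexOn ℝ univ φ) (h0 : φ 0 ≤ 0)
    (hpos : ∀ x, x ≠ 0 → 0 < φ x) : Tendsto φ (cocompact ℝ) atTop := by
  rw [cocompact_eq_atBot_atTop, tendsto_sup]
  constructor
  · refine tendsto_atTop_mono' _ ?_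
      (tendsto_neg_atBot_atTop.atTop_mul_const (hpos (-1) (by norm_num)))
    filter_upwards [eventually_le_atBot (-1)] with t ht
    simpa using hφ.mul_le_map_smul_of_one_le h0 (-1) (by linarith : 1 ≤ -t)
  · refine tendsto_atTop_mono' _ ?_ (tendsto_id.atTop_mul_const (hpos 1 one_ne_zero))
    filter_upwards [eventually_ge_atTop 1] with t ht
    simpa using hφ.mul_le_map_smul_of_one_le h0 1 ht

lemma measure_sublevel_ne_top_of_tendsto_cocompact {X : Type*} [TopologicalSpace X]
    [MeasurableSpace X] {μ : Measure X} [IsFiniteMeasureOnCompacts μ] {φ : X → ℝ}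
    (hφ : Tendsto φ (cocompact X) atTop) (M : ℝ) : μ {x | φ x < M} ≠ ∞ := by
  obtain ⟨K, hK, hKs⟩ := mem_cocompact.1 (hφ.eventually_ge_atTop M)
  refine ne_top_of_le_ne_top hK.measure_lt_top.ne (measure_mono fun x (hx : φ x < M) => ?_)
  by_contra hxK
  exact (hKs hxK).not_gt hx

theorem orlicz_ratio_surjective
    (Ψ : ℝ → ℝ)
    (hconv : ConvexOn ℝ Set.univ Ψ)
    (hnonneg : ∀ x, 0 ≤ Ψ x)
    (hzero : ∀ x, Ψ x = 0 ↔ x = 0)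
    (hint : ∀ l : ℝ, 0 < l → Integrable (fun t => Real.exp (-l * Ψ t))) :
    ∀ m : ℝ, 0 < m → ∃ l : ℝ, 0 < l ∧
      (∫ t, Ψ t * Real.exp (-l * Ψ t)) / (∫ t, Real.exp (-l * Ψ t)) = m := by
  intro m hm
  have hcont : Continuous Ψ := continuousOn_univ.1 (hconv.continuousOn isOpen_univ)
  have hΨ0 : Ψ 0 = 0 := (hzero 0).2 rfl
  have hfin : ∀ M, volume {t | Ψ t < M} ≠ ∞ :=
    measure_sublevel_ne_top_of_tendsto_cocompact <| hconv.tendsto_cocompact_atTop hΨ0.le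
      fun x hx => (hnonneg x).lt_of_ne' fun h => hx ((hzero x).1 h)
  have hpos : ∀ ε, 0 < ε → 0 < volume.real {t | Ψ t < ε} := fun ε hε =>
    ENNReal.toReal_pos ((isOpen_lt hcont continuous_const).measure_pos volume
      ⟨0, by simpa [hΨ0] using hε⟩).ne' (hfin ε)
  obtain ⟨a, hRa, ha⟩ := ((tendsto_meanEnergy_atTop hcont.measurable hnonneg hint hpos).eventually
    (eventually_le_nhds hm)).and (eventually_gt_atTop 0) |>.exists
  obtain ⟨b, hRb, hb⟩ := ((tendsto_meanEnergy_nhdsGT_zero hcont.measurable hnonneg hint hfin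
    volume_univ).eventually_ge_atTop m).and self_mem_nhdsWithin |>.exists
  exact isPreconnected_Ioi.intermediate_value ha hb
    (continuousOn_meanEnergy hcont.measurable hnonneg hint) ⟨hRa, hRb⟩
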